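/- If f is holomorphic with nonvanishing derivative and q = S(f) is its Schwarzian derivative, then for every polynomial P of degree at most 2, the function (P∘f)/f' satisfies Λ_q((P∘f)/f') = 0. -/

import Mathlib

/-- The third-order operator `Λ_q(F) = F''' + 2 q F' + q' F`. -/
noncomputable def Lambda (q F : ℂ → ℂ) (z : ℂ) : ℂ :=
  deriv (deriv (deriv F)) z + 2 * q z * deriv F z + deriv q z * F z

/-- The Schwarzian derivative `S(f) = f'''/f' - (3/2)(f''/f')²`. -/
noncomputable def schwarzian (f : ℂ → ℂ) (z : ℂ) : ℂ :=
  deriv (deriv (deriv f)) z / deriv f z - (3/2) * (deriv (deriv f) z / deriv f z) ^ 2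

/-! With `g = 1/f'`, the Schwarzian becomes `2 S(f) g² = g'² - 2 g g''`, and differentiating this
identity gives `Λ_{S(f)}(g) = 0`. Together with the Leibniz rule for `Λ` this yields
`Λ_{S(f)}(u/f') = f'² (d/df)³ u` for every entire `u`, and `(d/df)³ (P ∘ f) = P''' ∘ f = 0`
when `P` is quadratic. -/

open Polynomial

theorem Lambda_eq (q F : ℂ → ℂ) :
    Lambda q F = deriv (deriv (deriv F)) + 2 * q * deriv F + deriv q * F := rfl

section DerivCalculus

variable {u v : ℂ → ℂ}

theorem deriv_mul_eq (hu : Differentiable ℂ u) (hv : Differentiable ℂ v) :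
    deriv (u * v) = deriv u * v + u * deriv v :=
  funext fun z => deriv_mul (hu z) (hv z)

theorem deriv_add_eq (hu : Differentiable ℂ u) (hv : Differentiable ℂ v) :
    deriv (u + v) = deriv u + deriv v :=
  funext fun z => deriv_add (hu z) (hv z)

theorem deriv_sub_eq (hu : Differentiable ℂ u) (hv : Differentiable ℂ v) :
    deriv (u - v) = deriv u - deriv v :=
  funext fun z => deriv_sub (hu z) (hv z)

theorem Lambda_mul (q : ℂ → ℂ) (hu : Differentiable ℂ u) (hv : Differentiable ℂ v) :
    Lambda q (u * v) = u * Lambda q v + (3 * deriv u * deriv (deriv v)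
      + 3 * deriv (deriv u) * deriv v + deriv (deriv (deriv u)) * v + 2 * q * deriv u * v) := by
  simp (disch := fun_prop) only [Lambda_eq, deriv_mul_eq, deriv_add_eq]
  ring

end DerivCalculus

noncomputable def derivWrt (f u : ℂ → ℂ) : ℂ → ℂ := (deriv f)⁻¹ * deriv u

section Schwarzian

variable {f : ℂ → ℂ}

theorem differentiable_inv_deriv (hf : Differentiable ℂ f) (hf' : ∀ z, deriv f z ≠ 0) :
    Differentiable ℂ (deriv f)⁻¹ :=
  hf.deriv.inv hf'

theorem differentiable_schwarzian (hf : Differentiable ℂ f) (hf' : ∀ z, deriv f z ≠ 0) :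
    Differentiable ℂ (schwarzian f) := by
  unfold schwarzian
  fun_prop (disch := exact hf' _)

theorem two_mul_schwarzian_mul_inv_deriv_sq (hf : Differentiable ℂ f)
    (hf' : ∀ z, deriv f z ≠ 0) :
    2 * schwarzian f * (deriv f)⁻¹ ^ 2
      = deriv (deriv f)⁻¹ ^ 2 - 2 * (deriv f)⁻¹ * deriv (deriv (deriv f)⁻¹) := by
  have hg := differentiable_inv_deriv hf hf'
  have h0 : deriv f * (deriv f)⁻¹ = 1 := funext fun z => mul_inv_cancel₀ (hf' z)
  have h1 := congrArg deriv h0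
  simp (disch := fun_prop) only [deriv_mul_eq, deriv_one] at h1
  have h2 := congrArg deriv h1
  simp (disch := fun_prop) only [deriv_mul_eq, deriv_add_eq, deriv_zero] at h2
  funext z
  have r1 := congrFun h1 z
  have r2 := congrFun h2 z
  simp only [Pi.mul_apply, Pi.add_apply, Pi.inv_apply, Pi.zero_apply] at r1 r2
  simp only [schwarzian, Pi.mul_apply, Pi.sub_apply, Pi.pow_apply, Pi.inv_apply, Pi.ofNat_apply]
  have hx := hf' z
  linear_combination (norm := skip) (2 / deriv f z ^ 2) * r2
    - (deriv (deriv f)⁻¹ z + 3 * deriv (deriv f) z / deriv f z ^ 2) / deriv f z * r1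
  field_simp
  ring

theorem Lambda_schwarzian_inv_deriv (hf : Differentiable ℂ f) (hf' : ∀ z, deriv f z ≠ 0) :
    Lambda (schwarzian f) (deriv f)⁻¹ = 0 := by
  have hg := differentiable_inv_deriv hf hf'
  have hq := differentiable_schwarzian hf hf'
  have h := congrArg deriv (two_mul_schwarzian_mul_inv_deriv_sq hf hf')
  simp (disch := fun_prop) only [deriv_mul_eq, deriv_sub_eq, sq, deriv_ofNat] at h
  funext z
  have hz := congrFun h z
  simp only [Pi.mul_apply, Pi.add_apply, Pi.sub_apply, Pi.ofNat_apply, Pi.inv_apply] at hz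
  have hx := hf' z
  simp only [Lambda, Pi.zero_apply, Pi.inv_apply]
  linear_combination (norm := skip) (deriv f z / 2) * hz
  field_simp
  ring

theorem Lambda_schwarzian_mul_inv_deriv (hf : Differentiable ℂ f) (hf' : ∀ z, deriv f z ≠ 0)
    {u : ℂ → ℂ} (hu : Differentiable ℂ u) :
    Lambda (schwarzian f) (u * (deriv f)⁻¹)
      = deriv f ^ 2 * derivWrt f (derivWrt f (derivWrt f u)) := by
  have hg := differentiable_inv_deriv hf hf'
  have h0 : deriv f * (deriv f)⁻¹ = 1 := funext fun z => mul_inv_cancel₀ (hf' z)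
  rw [Lambda_mul _ hu hg, Lambda_schwarzian_inv_deriv hf hf', mul_zero, zero_add]
  simp (disch := fun_prop) only [derivWrt, deriv_mul_eq, deriv_add_eq]
  set g := (deriv f)⁻¹
  linear_combination (deriv f * deriv u) * two_mul_schwarzian_mul_inv_deriv_sq hf hf'
    - ((3 + deriv f * g) * deriv (deriv g) * deriv u
      + (1 + deriv f * g) * (3 * deriv (deriv u) * deriv g + deriv (deriv (deriv u)) * g)
      + 2 * schwarzian f * g * deriv u + deriv f * deriv g ^ 2 * deriv u) * h0

theorem derivWrt_eval_comp (hf : Differentiable ℂ f) (hf' : ∀ z, deriv f z ≠ 0) (P : ℂ[X]) :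
    derivWrt f (fun w => P.eval (f w)) = fun w => P.derivative.eval (f w) := by
  funext w
  have hd : HasDerivAt (fun w => P.eval (f w)) (P.derivative.eval (f w) * deriv f w) w :=
    (P.hasDerivAt (f w)).comp w (hf w).hasDerivAt
  rw [derivWrt, Pi.mul_apply, Pi.inv_apply, hd.deriv]
  field_simp [hf' w]

end Schwarzian

/-- If `q = S(f)` then `Λ_q((P ∘ f)/f') = 0` for every quadratic polynomial `P`. -/
theorem lambda_kernel_quadratic (f : ℂ → ℂ) (hf : Differentiable ℂ f)
    (hf' : ∀ z, deriv f z ≠ 0) (a b c : ℂ) :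
    ∀ z, Lambda (schwarzian f)
      (fun w => (a * (f w) ^ 2 + b * f w + c) / deriv f w) z = 0 := by
  set P : ℂ[X] := C a * X ^ 2 + C b * X + C c
  have hF : (fun w => (a * (f w) ^ 2 + b * f w + c) / deriv f w)
      = (fun w => P.eval (f w)) * (deriv f)⁻¹ := by
    funext w
    simp [P, div_eq_mul_inv]
  have hP : derivative (derivative (derivative P)) = 0 :=
    iterate_derivative_eq_zero (x := 3) (natDegree_quadratic_le.trans_lt (by norm_num))
  intro z
  rw [hF, Lambda_schwarzian_mul_inv_deriv hf hf' (by fun_prop)]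
  simp only [derivWrt_eval_comp hf hf', hP]
  simp
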